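/- arXiv:2603.24025 — 2 statements merged into one kernel-verified Lean document; each statement's English description precedes it below -/
import Mathlib

section
/- Let $z_1,\dots,z_n$ be points in a real inner product space, let $\ell: [n] \to [K]$ be a labeling with centers $u_1,\dots,u_K$, and let $(\hat\ell, \hat u)$ be any labeling and centers with $L(\hat\ell,\hat u) \leq L(\ell, u)$ where $L(\ell',u') = \sum_{i=1}^n \|z_i - u'_{\ell'(i)}\|^2$. Fix $k \in [K]$ and let $n_k = |\{i: \ell(i) = k\}| > 0$. Then there exists $j \in [K]$ such that $\|u_k - \hat u_j\|^2 \leq 4 L(\ell, u)/n_k$. -/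
lemma sq_norm_triangle {E : Type*} [NormedAddCommGroup E] (a b c : E) :
    ‖a - b‖ ^ 2 ≤ 2 * ‖a - c‖ ^ 2 + 2 * ‖c - b‖ ^ 2 := by
  have h : ‖a - b‖ ≤ ‖a - c‖ + ‖c - b‖ := norm_sub_le_norm_sub_add_norm_sub a c b
  nlinarith [sq_nonneg (‖a - c‖ - ‖c - b‖), norm_nonneg (a - b), norm_nonneg (a - c), norm_nonneg (c - b), sq_nonneg (‖a - c‖ + ‖c - b‖)]

/-- Cluster-center matching lemma: if the k-means objective of (ℓ̂, û) is no larger than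
that of (ℓ, u), then every true center u_k with nonempty cluster is within
distance² 4·L(ℓ,u)/n_k of some estimated center. -/
theorem cluster_center_matching {E : Type*} [NormedAddCommGroup E] [InnerProductSpace ℝ E]
    (n K : ℕ) (hK : 0 < K) (z : Fin n → E) (ℓ ℓhat : Fin n → Fin K) (u uhat : Fin K → E)
    (hL : ∑ i, ‖z i - uhat (ℓhat i)‖ ^ 2 ≤ ∑ i, ‖z i - u (ℓ i)‖ ^ 2)
    (k : Fin K)
    (hnk : 0 < (Finset.univ.filter (fun i => ℓ i = k)).card) :
    ∃ j : Fin K, ‖u k - uhat j‖ ^ 2 ≤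
      4 * (∑ i, ‖z i - u (ℓ i)‖ ^ 2) / (Finset.univ.filter (fun i => ℓ i = k)).card := by
  set S := Finset.univ.filter (fun i => ℓ i = k) with hS
  set L := ∑ i, ‖z i - u (ℓ i)‖ ^ 2 with hLdef
  obtain ⟨j, -, hj⟩ := Finset.exists_min_image (Finset.univ : Finset (Fin K))
    (fun j' => ‖u k - uhat j'‖ ^ 2) ⟨⟨0, hK⟩, Finset.mem_univ _⟩
  refine ⟨j, ?_⟩
  have hcard : (0 : ℝ) < (S.card : ℝ) := by exact_mod_cast hnk
  rw [le_div_iff₀ hcard]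
  have h1 : ‖u k - uhat j‖ ^ 2 * (S.card : ℝ) = ∑ _i ∈ S, ‖u k - uhat j‖ ^ 2 := by
    rw [Finset.sum_const, nsmul_eq_mul, mul_comm]
  rw [h1]
  have h2 : ∑ i ∈ S, ‖u k - uhat j‖ ^ 2 ≤
      ∑ i ∈ S, (2 * ‖u k - z i‖ ^ 2 + 2 * ‖z i - uhat (ℓhat i)‖ ^ 2) := by
    refine Finset.sum_le_sum fun i _ => ?_
    exact le_trans (hj (ℓhat i) (Finset.mem_univ _)) (sq_norm_triangle _ _ (z i))
  refine h2.trans ?_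
  rw [Finset.sum_add_distrib, ← Finset.mul_sum, ← Finset.mul_sum]
  have hA : ∑ i ∈ S, ‖u k - z i‖ ^ 2 ≤ L := by
    rw [hLdef]
    calc ∑ i ∈ S, ‖u k - z i‖ ^ 2 = ∑ i ∈ S, ‖z i - u (ℓ i)‖ ^ 2 := by
          refine Finset.sum_congr rfl fun i hi => ?_
          have : ℓ i = k := (Finset.mem_filter.mp hi).2
          rw [this, norm_sub_rev]
      _ ≤ ∑ i, ‖z i - u (ℓ i)‖ ^ 2 :=
          Finset.sum_le_sum_of_subset_of_nonneg (Finset.subset_univ _)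
            (fun i _ _ => by positivity)
  have hB : ∑ i ∈ S, ‖z i - uhat (ℓhat i)‖ ^ 2 ≤ L := by
    refine le_trans ?_ hL
    exact Finset.sum_le_sum_of_subset_of_nonneg (Finset.subset_univ _)
      (fun i _ _ => by positivity)
  linarith
end

section
/- Let $z_1,\dots,z_n$ and centers $u_1,\dots,u_K$, $\hat u_1,\dots,\hat u_K$ be points in a real inner product space, and let $\ell,\hat\ell: [n] \to [K]$ be labelings. Suppose $L(\hat\ell,\hat u) \leq L(\ell, u)$, where $L(\ell',u') = \sum_i \|z_i - u'_{\ell'(i)}\|^2$, and suppose $\|u_{k} - \hat u_{k'}\|^2 \geq 1/n$ whenever $k \neq k'$. Let $S = \{i: \hat\ell(i) \neq \ell(i)\}$. Then $|S| \leq 4n\, L(\ell, u)$. -/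
/-- Misclassification counting: if L(ℓ̂,û) ≤ L(ℓ,u) and distinct matched centers are
separated by ‖u_k - û_k'‖² ≥ 1/n for k ≠ k', then the number of misclassified points
S = {i : ℓ̂(i) ≠ ℓ(i)} satisfies |S| ≤ 4n·L(ℓ,u). -/
theorem misclassification_count {E : Type*} [NormedAddCommGroup E] [InnerProductSpace ℝ E]
    (n K : ℕ) (z : Fin n → E) (ℓ ℓhat : Fin n → Fin K) (u uhat : Fin K → E)
    (hL : ∑ i, ‖z i - uhat (ℓhat i)‖ ^ 2 ≤ ∑ i, ‖z i - u (ℓ i)‖ ^ 2)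
    (hsep : ∀ k k' : Fin K, k ≠ k' → (1 : ℝ) / n ≤ ‖u k - uhat k'‖ ^ 2) :
    ((Finset.univ.filter (fun i => ℓhat i ≠ ℓ i)).card : ℝ) ≤
      4 * n * ∑ i, ‖z i - u (ℓ i)‖ ^ 2 := by
  rcases Nat.eq_zero_or_pos n with hn | hn
  · subst hn
    simp
  set S := Finset.univ.filter (fun i : Fin n => ℓhat i ≠ ℓ i) with hS
  have key : ∀ i ∈ S, (1 : ℝ) / n ≤
      2 * ‖z i - u (ℓ i)‖ ^ 2 + 2 * ‖z i - uhat (ℓhat i)‖ ^ 2 := by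
    intro i hi
    have hne : ℓ i ≠ ℓhat i := fun h => (Finset.mem_filter.mp hi).2 h.symm
    refine (hsep _ _ hne).trans ?_
    have htri : ‖u (ℓ i) - uhat (ℓhat i)‖ ≤ ‖z i - u (ℓ i)‖ + ‖z i - uhat (ℓhat i)‖ := by
      have := norm_sub_le_norm_sub_add_norm_sub (u (ℓ i)) (z i) (uhat (ℓhat i))
      simpa [norm_sub_rev] using this
    nlinarith [norm_nonneg (u (ℓ i) - uhat (ℓhat i)), norm_nonneg (z i - u (ℓ i)),
      norm_nonneg (z i - uhat (ℓhat i)), sq_nonneg (‖z i - u (ℓ i)‖ - ‖z i - uhat (ℓhat i)‖)]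
  have h1 : (S.card : ℝ) * (1 / n) ≤
      ∑ i ∈ S, (2 * ‖z i - u (ℓ i)‖ ^ 2 + 2 * ‖z i - uhat (ℓhat i)‖ ^ 2) := by
    calc (S.card : ℝ) * (1 / n) = ∑ _i ∈ S, (1 : ℝ) / n := by
          rw [Finset.sum_const, nsmul_eq_mul]
      _ ≤ _ := Finset.sum_le_sum key
  have h2 : ∑ i ∈ S, (2 * ‖z i - u (ℓ i)‖ ^ 2 + 2 * ‖z i - uhat (ℓhat i)‖ ^ 2) ≤
      ∑ i, (2 * ‖z i - u (ℓ i)‖ ^ 2 + 2 * ‖z i - uhat (ℓhat i)‖ ^ 2) := by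
    apply Finset.sum_le_sum_of_subset_of_nonneg (Finset.subset_univ S)
    intro i _ _
    positivity
  have h3 : ∑ i, (2 * ‖z i - u (ℓ i)‖ ^ 2 + 2 * ‖z i - uhat (ℓhat i)‖ ^ 2) ≤
      4 * ∑ i, ‖z i - u (ℓ i)‖ ^ 2 := by
    rw [Finset.sum_add_distrib, ← Finset.mul_sum, ← Finset.mul_sum]
    linarith
  have hn' : (0 : ℝ) < n := by exact_mod_cast hn
  have := (h1.trans h2).trans h3
  rw [mul_one_div] at this
  rw [div_le_iff₀ hn'] at this
  linarith
end
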